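/- arXiv:1705.05380 — 3 statements merged into one kernel-verified Lean document; each statement's English description precedes it below -/
import Mathlib

section
/- For all t ∈ (0,1] and x ∈ (0, π), one has (sin(tx) − tx·cos(tx)) / (sin(x) − x·cos(x)) ≥ t³. -/
/-! With `g s = sin s - s * cos s`, the claim is `g (t x) / (t x)³ ≥ g x / x³`, i.e. that
`g s / s³` decreases on `(0, π]`. Its derivative has the sign of `s² sin s - 3 g s`, which
vanishes at `0` and has derivative `-s g s`; and `g` itself is positive since `g' s = s sin s`. -/

open Real Set

theorem pos_of_hasDerivAt_pos_of_eq_zero {f f' : ℝ → ℝ} {b x : ℝ}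
    (hf : ∀ y, HasDerivAt f (f' y) y) (hf0 : f 0 = 0) (hf' : ∀ y ∈ Ioo 0 b, 0 < f' y)
    (hx : x ∈ Ioc 0 b) : 0 < f x := by
  have hmono : StrictMonoOn f (Icc 0 b) := by
    refine strictMonoOn_of_hasDerivWithinAt_pos (convex_Icc 0 b)
      (fun y _ ↦ (hf y).continuousAt.continuousWithinAt) (fun y _ ↦ (hf y).hasDerivWithinAt) ?_
    rwa [interior_Icc]
  simpa [hf0] using hmono (left_mem_Icc.mpr (hx.1.le.trans hx.2)) (Ioc_subset_Icc_self hx) hx.1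

theorem hasDerivAt_sin_sub_mul_cos (x : ℝ) :
    HasDerivAt (fun s ↦ sin s - s * cos s) (x * sin x) x :=
  ((hasDerivAt_sin x).sub ((hasDerivAt_id' x).mul (hasDerivAt_cos x))).congr_deriv (by ring)

theorem sin_sub_mul_cos_pos {x : ℝ} (hx : x ∈ Ioc 0 π) : 0 < sin x - x * cos x :=
  pos_of_hasDerivAt_pos_of_eq_zero (f := fun s ↦ sin s - s * cos s) hasDerivAt_sin_sub_mul_cos
    (by simp) (fun y hy ↦ mul_pos hy.1 (sin_pos_of_pos_of_lt_pi hy.1 hy.2)) hx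

theorem sq_mul_sin_lt_three_mul_sin_sub_mul_cos {x : ℝ} (hx : x ∈ Ioc 0 π) :
    x ^ 2 * sin x < 3 * (sin x - x * cos x) := by
  have hderiv (y : ℝ) : HasDerivAt (fun s ↦ 3 * (sin s - s * cos s) - s ^ 2 * sin s)
      (y * (sin y - y * cos y)) y :=
    (((hasDerivAt_sin_sub_mul_cos y).const_mul 3).sub
      ((hasDerivAt_pow 2 y).mul (hasDerivAt_sin y))).congr_deriv (by ring)
  have := pos_of_hasDerivAt_pos_of_eq_zero
    (f := fun s ↦ 3 * (sin s - s * cos s) - s ^ 2 * sin s) hderiv (by simp)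
    (fun y hy ↦ mul_pos hy.1 (sin_sub_mul_cos_pos (Ioo_subset_Ioc_self hy))) hx
  linarith

theorem antitoneOn_sin_sub_mul_cos_div_pow_three :
    AntitoneOn (fun s ↦ (sin s - s * cos s) / s ^ 3) (Ioc 0 π) := by
  have hderiv {y : ℝ} (hy : y ≠ 0) : HasDerivAt (fun s ↦ (sin s - s * cos s) / s ^ 3)
      ((y ^ 2 * sin y - 3 * (sin y - y * cos y)) / y ^ 4) y :=
    ((hasDerivAt_sin_sub_mul_cos y).div (hasDerivAt_pow 3 y) (pow_ne_zero 3 hy)).congr_deriv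
      (by field_simp; ring)
  refine antitoneOn_of_hasDerivWithinAt_nonpos (convex_Ioc 0 π)
    (fun y hy ↦ (hderiv hy.1.ne').continuousAt.continuousWithinAt)
    (fun y hy ↦ (hderiv (interior_subset hy).1.ne').hasDerivWithinAt) ?_
  rw [interior_Ioc]
  intro y hy
  have key := sq_mul_sin_lt_three_mul_sin_sub_mul_cos (Ioo_subset_Ioc_self hy)
  exact div_nonpos_of_nonpos_of_nonneg (by linarith) (by positivity)

theorem heisenberg_scalar_inequality (t x : ℝ)
    (ht : t ∈ Set.Ioc (0 : ℝ) 1) (hx : x ∈ Set.Ioo (0 : ℝ) π) :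
    (sin (t * x) - t * x * cos (t * x)) / (sin x - x * cos x) ≥ t ^ 3 := by
  obtain ⟨ht0, ht1⟩ := ht
  obtain ⟨hx0, hxπ⟩ := hx
  have htx_le : t * x ≤ x := mul_le_of_le_one_left hx0.le ht1
  have htx : t * x ∈ Ioc 0 π := ⟨mul_pos ht0 hx0, htx_le.trans hxπ.le⟩
  have key := antitoneOn_sin_sub_mul_cos_div_pow_three htx ⟨hx0, hxπ.le⟩ htx_le
  beta_reduce at key
  rw [mul_pow, div_le_div_iff₀ (by positivity) (by positivity)] at key
  rw [ge_iff_le, le_div_iff₀ (sin_sub_mul_cos_pos ⟨hx0, hxπ.le⟩)]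
  exact le_of_mul_le_mul_right (by linarith) (pow_pos hx0 3)
end

section
/- Let N ∈ ℝ and define f_u,x(t) := t²·(t²u² + 3tux + 3x²)/(u² + 3ux + 3x²) for x > 0 and u ∈ ℝ (note u² + 3ux + 3x² > 0 always). Then f_u,x(t) ≥ t^N for all t ∈ [0,1], all x > 0 and all u ∈ ℝ, if and only if N ≥ 5. -/
/-!
The numerator of `f_{u,x}(t) - t⁵` factors as
`t² (1 - t) ((t u + 3 (1 + t) x / 2)² + 3 (1 - t)² x² / 4)`, which is nonnegative for
`0 ≤ t ≤ 1`; hence `f_{u,x}(t) ≥ t⁵ ≥ t^N` when `N ≥ 5`. Conversely, `u = -3, x = 1` makes the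
slope of `f_{u,x}` at `t = 1` as large as possible: there `f(t) = t⁵ + t² (1 - t)³`. Since
`f ≥ t^N` on `[0, 1]` with equality at `t = 1`, the slopes there satisfy `5 = f'(1) ≤ N`.
-/

open Set

/-- The distortion coefficient `f_{u,x}(t)` of a horizontal Grushin geodesic. -/
noncomputable def grushinDistortion (u x t : ℝ) : ℝ :=
  t ^ 2 * (t ^ 2 * u ^ 2 + 3 * t * u * x + 3 * x ^ 2) / (u ^ 2 + 3 * u * x + 3 * x ^ 2)

theorem HasDerivAt.le_of_le_on_Icc_of_eq_right {f g : ℝ → ℝ} {f' g' a b : ℝ} (hab : a < b)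
    (hf : HasDerivAt f f' b) (hg : HasDerivAt g g' b) (hb : f b = g b)
    (hle : ∀ t ∈ Icc a b, f t ≤ g t) : g' ≤ f' := by
  have hmin : IsLocalMinOn (fun t ↦ g t - f t) (Icc a b) b :=
    IsMinOn.localize fun t ht ↦ by simpa [hb] using hle t ht
  have hdir : a - b ∈ posTangentConeAt (Icc a b) b :=
    mem_posTangentConeAt_of_segment_subset <| by
      rw [add_sub_cancel, segment_symm, segment_eq_Icc hab.le]
  have hslope := hmin.hasFDerivWithinAt_nonneg (hg.sub hf).hasFDerivAt.hasFDerivWithinAt hdir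
  rw [ContinuousLinearMap.toSpanSingleton_apply, smul_eq_mul] at hslope
  nlinarith

theorem grushinDistortion_denom_pos (u : ℝ) {x : ℝ} (hx : x ≠ 0) :
    0 < u ^ 2 + 3 * u * x + 3 * x ^ 2 := by
  have hsq : u ^ 2 + 3 * u * x + 3 * x ^ 2 = (u + 3 * x / 2) ^ 2 + 3 * x ^ 2 / 4 := by ring
  rw [hsq]
  positivity

theorem grushinDistortion_sub_pow_five (u x t : ℝ) (hD : u ^ 2 + 3 * u * x + 3 * x ^ 2 ≠ 0) :
    grushinDistortion u x t - t ^ 5 =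
      t ^ 2 * (1 - t) * ((t * u + 3 * (1 + t) * x / 2) ^ 2 + 3 * (1 - t) ^ 2 * x ^ 2 / 4) /
        (u ^ 2 + 3 * u * x + 3 * x ^ 2) := by
  rw [grushinDistortion, eq_div_iff hD, sub_mul, div_mul_cancel₀ _ hD]
  ring

theorem pow_five_le_grushinDistortion (u : ℝ) {x t : ℝ} (hx : x ≠ 0) (ht : t ∈ Icc (0 : ℝ) 1) :
    t ^ 5 ≤ grushinDistortion u x t := by
  have hD := grushinDistortion_denom_pos u hx
  rw [← sub_nonneg, grushinDistortion_sub_pow_five u x t hD.ne']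
  have h1t : 0 ≤ 1 - t := sub_nonneg.2 ht.2
  positivity

theorem grushinDistortion_neg_three_one (t : ℝ) :
    grushinDistortion (-3) 1 t = t ^ 5 + t ^ 2 * (1 - t) ^ 3 := by
  rw [grushinDistortion]
  ring

theorem five_le_of_rpow_le_pow_five_add {N : ℝ}
    (h : ∀ t ∈ Icc (0 : ℝ) 1, t ^ N ≤ t ^ 5 + t ^ 2 * (1 - t) ^ 3) : 5 ≤ N := by
  have hf : HasDerivAt (fun t : ℝ ↦ t ^ N) N 1 := by
    simpa using Real.hasDerivAt_rpow_const (x := 1) (p := N) (Or.inl one_ne_zero)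
  have hg : HasDerivAt (fun t : ℝ ↦ t ^ 5 + t ^ 2 * (1 - t) ^ 3) 5 1 := by
    have hcube := ((hasDerivAt_id' (1 : ℝ)).const_sub 1).pow 3
    refine ((hasDerivAt_pow 5 1).add ((hasDerivAt_pow 2 1).mul hcube)).congr_deriv ?_
    norm_num
  exact hf.le_of_le_on_Icc_of_eq_right zero_lt_one hg (by norm_num) h

theorem grushin_horizontal_distortion_sharp (N : ℝ) :
    (∀ t ∈ Set.Icc (0 : ℝ) 1, ∀ x : ℝ, 0 < x → ∀ u : ℝ,
      t ^ 2 * (t ^ 2 * u ^ 2 + 3 * t * u * x + 3 * x ^ 2) /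
        (u ^ 2 + 3 * u * x + 3 * x ^ 2) ≥ t ^ N) ↔ 5 ≤ N := by
  constructor
  · intro h
    refine five_le_of_rpow_le_pow_five_add fun t ht ↦ ?_
    rw [← grushinDistortion_neg_three_one]
    exact h t ht 1 one_pos (-3)
  · intro hN t ht x hx u
    calc t ^ N ≤ t ^ (5 : ℝ) := Real.rpow_le_rpow_of_exponent_ge' ht.1 ht.2 (by norm_num) hN
      _ = t ^ 5 := by norm_cast
      _ ≤ grushinDistortion u x t := pow_five_le_grushinDistortion u hx.ne' ht
end

section
/- Define W̄(z) := (64 − 25z²)·sin(z)² + 10z(z² − 8)·cos(z)·sin(z) + z²(16 − z²)·cos(z)². Then W̄(z) ≥ 0 for all z ∈ (0, π). -/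
open Real

/-!
Write `s = sin z`, `c = cos z` and `G = (48 - 19 z²) s - 3 z (16 - z²) c`. Completing the square,
`9 (16 - z²) W̄(z) = ((72 + 4 z²) s + G)² - 576 (9 + z²) s²`,
so if `s ≥ 0` and `G ≥ 0` the right side is at least `(72 + 4 z²)² s² - 576 (9 + z²) s² = 16 z⁴ s²`.
The inequality `G ≥ 0` on `[0, 4]` follows from the alternating Taylor bounds for `sin` and `cos`
up to degree 9, which reduce it to the positivity of a polynomial.
-/

noncomputable def sinTaylor (n : ℕ) (x : ℝ) : ℝ :=
  ∑ k ∈ Finset.range n, (-1) ^ k * x ^ (2 * k + 1) / (2 * k + 1).factorial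

noncomputable def cosTaylor (n : ℕ) (x : ℝ) : ℝ :=
  ∑ k ∈ Finset.range n, (-1) ^ k * x ^ (2 * k) / (2 * k).factorial

@[simp] lemma sinTaylor_zero_right (n : ℕ) : sinTaylor n 0 = 0 := by
  simp [sinTaylor]

@[simp] lemma cosTaylor_succ_zero_right (n : ℕ) : cosTaylor (n + 1) 0 = 1 := by
  simp [cosTaylor, Finset.sum_range_succ']

lemma hasDerivAt_sinTaylor (n : ℕ) (x : ℝ) : HasDerivAt (sinTaylor n) (cosTaylor n x) x := by
  refine HasDerivAt.fun_sum fun k _ => ?_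
  refine (((hasDerivAt_pow (2 * k + 1) x).const_mul ((-1 : ℝ) ^ k)).div_const
    ((2 * k + 1).factorial : ℝ)).congr_deriv ?_
  rw [Nat.factorial_succ]
  push_cast
  field_simp

lemma hasDerivAt_cosTaylor_succ (n : ℕ) (x : ℝ) :
    HasDerivAt (cosTaylor (n + 1)) (-sinTaylor n x) x := by
  have h : cosTaylor (n + 1) = fun y => ∑ k ∈ Finset.range n,
      (-1 : ℝ) ^ (k + 1) * y ^ (2 * k + 2) / (2 * k + 2).factorial + 1 := by
    ext y
    simp [cosTaylor, Finset.sum_range_succ', mul_add]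
  rw [h, sinTaylor, ← Finset.sum_neg_distrib]
  refine (HasDerivAt.fun_sum fun k _ => ?_).add_const 1
  refine (((hasDerivAt_pow (2 * k + 2) x).const_mul ((-1 : ℝ) ^ (k + 1))).div_const
    ((2 * k + 2).factorial : ℝ)).congr_deriv ?_
  rw [Nat.factorial_succ (2 * k + 1)]
  push_cast
  field_simp
  ring

lemma nonneg_of_hasDerivAt_nonneg {f f' : ℝ → ℝ} (hf : ∀ x, HasDerivAt f (f' x) x)
    (hf' : ∀ x, 0 ≤ x → 0 ≤ f' x) (h0 : f 0 = 0) {x : ℝ} (hx : 0 ≤ x) : 0 ≤ f x := by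
  have hmono : MonotoneOn f (Set.Ici 0) :=
    monotoneOn_of_hasDerivWithinAt_nonneg (convex_Ici 0)
      (fun y _ => (hf y).continuousAt.continuousWithinAt)
      (fun y _ => (hf y).hasDerivWithinAt)
      (fun y hy => hf' y (interior_subset hy))
  simpa [h0] using hmono Set.self_mem_Ici hx hx

lemma neg_one_pow_mul_sin_sub_sinTaylor_nonneg_of_cos {n : ℕ}
    (hcos : ∀ x, 0 ≤ x → 0 ≤ (-1) ^ n * (cos x - cosTaylor n x)) {x : ℝ} (hx : 0 ≤ x) :
    0 ≤ (-1) ^ n * (sin x - sinTaylor n x) :=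
  nonneg_of_hasDerivAt_nonneg
    (fun y => (((hasDerivAt_sin y).sub (hasDerivAt_sinTaylor n y)).const_mul _)) hcos (by simp) hx

lemma neg_one_pow_mul_cos_sub_cosTaylor_nonneg (n : ℕ) {x : ℝ} (hx : 0 ≤ x) :
    0 ≤ (-1) ^ (n + 1) * (cos x - cosTaylor (n + 1) x) := by
  induction n generalizing x with
  | zero => simpa [cosTaylor] using cos_le_one x
  | succ n ih =>
    refine nonneg_of_hasDerivAt_nonneg
      (fun y => ((hasDerivAt_cos y).sub (hasDerivAt_cosTaylor_succ (n + 1) y)).const_mul _)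
      (fun y hy => ?_) (by simp) hx
    have := neg_one_pow_mul_sin_sub_sinTaylor_nonneg_of_cos (fun _ hz => ih hz) hy
    convert this using 1
    ring

lemma neg_one_pow_mul_sin_sub_sinTaylor_nonneg (n : ℕ) {x : ℝ} (hx : 0 ≤ x) :
    0 ≤ (-1) ^ (n + 1) * (sin x - sinTaylor (n + 1) x) :=
  neg_one_pow_mul_sin_sub_sinTaylor_nonneg_of_cos
    (fun _ hy => neg_one_pow_mul_cos_sub_cosTaylor_nonneg n hy) hx

lemma mul_cos_le_mul_sin_of_le_four {z : ℝ} (h0 : 0 ≤ z) (h4 : z ≤ 4) :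
    3 * z * (16 - z ^ 2) * cos z ≤ (48 - 19 * z ^ 2) * sin z := by
  have hsin_ge : z - z ^ 3 / 6 + z ^ 5 / 120 - z ^ 7 / 5040 ≤ sin z := by
    have := neg_one_pow_mul_sin_sub_sinTaylor_nonneg 3 h0
    norm_num [sinTaylor, Finset.sum_range_succ, Nat.factorial] at this
    linarith
  have hsin_le : sin z ≤ z - z ^ 3 / 6 + z ^ 5 / 120 - z ^ 7 / 5040 + z ^ 9 / 362880 := by
    have := neg_one_pow_mul_sin_sub_sinTaylor_nonneg 4 h0
    norm_num [sinTaylor, Finset.sum_range_succ, Nat.factorial] at this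
    linarith
  have hcos_le : cos z ≤ 1 - z ^ 2 / 2 + z ^ 4 / 24 - z ^ 6 / 720 + z ^ 8 / 40320 := by
    have := neg_one_pow_mul_cos_sub_cosTaylor_nonneg 4 h0
    norm_num [cosTaylor, Finset.sum_range_succ, Nat.factorial] at this
    linarith
  have hz16 : 0 ≤ 16 - z ^ 2 := by nlinarith
  have hcos_term : 3 * z * (16 - z ^ 2) * cos z ≤
      3 * z * (16 - z ^ 2) * (1 - z ^ 2 / 2 + z ^ 4 / 24 - z ^ 6 / 720 + z ^ 8 / 40320) :=
    mul_le_mul_of_nonneg_left hcos_le (by positivity)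
  -- In either case, the Taylor bounds leave a margin of exactly `hpoly`.
  rcases le_total (19 * z ^ 2) 48 with hw | hw
  · have hsin_term := mul_le_mul_of_nonneg_left hsin_ge (by linarith : 0 ≤ 48 - 19 * z ^ 2)
    have hpoly : 0 ≤ z ^ 5 * (1 / 15 + z ^ 2 / 42 - z ^ 4 / 630 + z ^ 6 / 13440) := by
      apply mul_nonneg (by positivity)
      nlinarith [mul_nonneg (sq_nonneg z) (by linarith : (0 : ℝ) ≤ 48 - 19 * z ^ 2),
        pow_nonneg h0 6]
    linarith
  · have hsin_term := mul_le_mul_of_nonpos_left hsin_le (by linarith : 48 - 19 * z ^ 2 ≤ 0)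
    have hpoly : 0 ≤ z ^ 5 * (1 / 15 + z ^ 2 / 42 - 11 * z ^ 4 / 7560 + z ^ 6 / 45360) := by
      apply mul_nonneg (by positivity)
      nlinarith [mul_nonneg (sq_nonneg z) hz16, pow_nonneg h0 6]
    linarith

theorem grushin_W_bar_nonneg (z : ℝ) (hz : z ∈ Set.Ioo (0 : ℝ) π) :
    (64 - 25 * z ^ 2) * sin z ^ 2 + 10 * z * (z ^ 2 - 8) * cos z * sin z +
      z ^ 2 * (16 - z ^ 2) * cos z ^ 2 ≥ 0 := by
  obtain ⟨hz0, hzπ⟩ := hz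
  have hs : 0 ≤ sin z := sin_nonneg_of_nonneg_of_le_pi hz0.le hzπ.le
  have hz4 : z < 4 := hzπ.trans_le pi_le_four
  have hG := mul_cos_le_mul_sin_of_le_four hz0.le hz4.le
  have hprod : 0 ≤ 9 * (16 - z ^ 2) * ((64 - 25 * z ^ 2) * sin z ^ 2 +
      10 * z * (z ^ 2 - 8) * cos z * sin z + z ^ 2 * (16 - z ^ 2) * cos z ^ 2) :=
    calc 0 ≤ (4 * z ^ 2 * sin z) ^ 2 := sq_nonneg _
      _ = ((72 + 4 * z ^ 2) * sin z) ^ 2 - 576 * (9 + z ^ 2) * sin z ^ 2 := by ring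
      _ ≤ ((72 + 4 * z ^ 2) * sin z + ((48 - 19 * z ^ 2) * sin z -
            3 * z * (16 - z ^ 2) * cos z)) ^ 2 - 576 * (9 + z ^ 2) * sin z ^ 2 := by
          gcongr
          linarith
      _ = _ := by ring
  exact nonneg_of_mul_nonneg_right hprod (by nlinarith)
end
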